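/- arXiv:2202.10183 — 4 statements merged into one kernel-verified Lean document; each statement's English description precedes it below -/
import Mathlib

section
/- Suppose R is a ternary relation symbol of L and f is good with right derivative satisfying f′(x) ≤ 1/(2(x+1)). Let A ≤ C and A ≤ T with A, C, T ∈ K_f, A ≠ C, A ≠ T, and let E be the free amalgam of C and T over A. Suppose t₁,…,t_r ∈ T∖A are d-independent over A (d^T(t₁…t_r/A) = r) and c ∈ C∖A. Let F be the L-structure obtained from E by adjoining r new points s₁,…,s_r and the additional relations R(c, s_i, t_i) for 1 ≤ i ≤ r. Then A ∪ {s₁,…,s_r} ≤ F, C ≤ F, T ≤ F, and F ∈ K_f. -/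
open FirstOrder Set

namespace MeasureAmalgamation

variable (L : FirstOrder.Language)

/-- The predimension `δ(A) = |A| − Σ_i |R_i[A]|` of a (finite) subset `A` of an
`L`-structure: the number of points minus the number of relation instances inside `A`. -/
noncomputable def delta {N : Type*} [L.Structure N] (A : Set N) : ℤ :=
  (A.ncard : ℤ) -
    (Set.ncard {p : Σ n, L.Relations n × (Fin n → N) |
      (∀ i, p.2.2 i ∈ A) ∧ Language.Structure.RelMap p.2.1 p.2.2} : ℤ)

/-- `A ≤ B` (`A` is self-sufficient in `B`): `A ⊆ B` and `δ(A) < δ(B′)` whenever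
`A ⊊ B′ ⊆ B` with `B′` finite. -/
def SelfSuffIn {N : Type*} [L.Structure N] (A B : Set N) : Prop :=
  A ⊆ B ∧ ∀ B' : Set N, A ⊂ B' → B' ⊆ B → B'.Finite → delta L A < delta L B'

/-- `A ≤ M` for the (possibly infinite) ambient structure:
`A ∩ X ≤ X` for every finite `X ⊆ M`. -/
def SelfSuffM {N : Type*} [L.Structure N] (A : Set N) : Prop :=
  ∀ X : Set N, X.Finite → SelfSuffIn L (A ∩ X) X

/-- The closure `cl_B(X)`: the smallest self-sufficient subset of `B` containing `X`. -/
def clIn {N : Type*} [L.Structure N] (X B : Set N) : Set N :=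
  ⋂₀ {A : Set N | X ⊆ A ∧ SelfSuffIn L A B}

/-- The dimension `d^B(X) = δ(cl_B(X))`. -/
noncomputable def dIn {N : Type*} [L.Structure N] (X B : Set N) : ℤ :=
  delta L (clIn L X B)

/-- The closure `cl_M(X)` in the ambient structure. -/
def clM {N : Type*} [L.Structure N] (X : Set N) : Set N :=
  ⋂₀ {A : Set N | X ⊆ A ∧ SelfSuffM L A}

/-- The dimension `d(X) = δ(cl_M(X))` in the ambient structure. -/
noncomputable def dM {N : Type*} [L.Structure N] (X : Set N) : ℤ :=
  delta L (clM L X)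

/-- Membership in the class `K_f`: every (finite) subset `X` satisfies
`δ(X) ≥ f(|X|)`. -/
def InKf (f : ℝ → ℝ) (B : Type*) [L.Structure B] : Prop :=
  ∀ X : Set B, X.Finite → f X.ncard ≤ (delta L X : ℝ)

/-- `f` is a good function (continuous, increasing, unbounded) certified by the standard
conditions guaranteeing the free amalgamation property for `(K_f, ≤)`: `f` has a
non-increasing right derivative `g` with `g(x) ≤ 1/(x+1)`. -/
structure IsGoodFun (f g : ℝ → ℝ) : Prop where
  cont : ContinuousOn f (Set.Ici 0)
  mono : StrictMonoOn f (Set.Ici 0)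
  unbounded : Filter.Tendsto f Filter.atTop Filter.atTop
  rightDeriv : ∀ x ∈ Set.Ici (0 : ℝ), HasDerivWithinAt f (g x) (Set.Ici x) x
  anti : AntitoneOn g (Set.Ici 0)
  bound : ∀ x ∈ Set.Ici (0 : ℝ), g x ≤ 1 / (x + 1)

/-- Any subset of a structure in a relational language is (the carrier of) a
substructure. -/
def relSub {N : Type*} [L.Structure N] [L.IsRelational] (A : Set N) :
    L.Substructure N where
  carrier := A
  fun_mem := fun {_} f => isEmptyElim f

/-- `N` is the generic structure `M_f` of the amalgamation class `(K_f, ≤)`: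
(1) `N` is the union of a chain of finite self-sufficient substructures, all in `K_f`;
(2) (`≤`-extension property) if `A ≤ N` is finite and `A ≤ B ∈ K_f`, then there is a
`≤`-embedding `β : B → N` fixing `A` pointwise. -/
def IsGeneric {N : Type*} [L.Structure N] [L.IsRelational] (f : ℝ → ℝ) : Prop :=
  (∃ c : ℕ → Set N, Monotone c ∧ (∀ k, (c k).Finite) ∧ (∀ k, SelfSuffM L (c k)) ∧
    (∀ (k : ℕ) (X : Set N), X ⊆ c k → f X.ncard ≤ (delta L X : ℝ)) ∧
    (⋃ k, c k) = Set.univ) ∧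
  (∀ A : Set N, A.Finite → SelfSuffM L A →
    ∀ (B : Type) (_ : Fintype B) (_ : L.Structure B), InKf L f B →
      ∀ e : ↥(relSub L A) ↪[L] B,
        SelfSuffIn L (Set.range ⇑e) (Set.univ : Set B) →
        ∃ g : B ↪[L] N, (∀ a : ↥(relSub L A), g (e a) = ↑a) ∧
          SelfSuffM L (Set.range ⇑g))

/-- Two tuples have the same complete type over `∅`. -/
def sameType {N : Type*} [L.Structure N] {k : ℕ} (a a' : Fin k → N) : Prop :=
  ∀ φ : L.Formula (Fin k), φ.Realize a ↔ φ.Realize a'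

/-- The locus `loc(b̄/ā)`: the set of realizations in `N` of the complete type of `b̄`
over `ā`. -/
def locus {N : Type*} [L.Structure N] {k m : ℕ} (a : Fin k → N) (b : Fin m → N) :
    Set (Fin m → N) :=
  {y | sameType L (Fin.append a y) (Fin.append a b)}

/-- A subset of `M` viewed as a subset of the power `M^{Fin 1}`. -/
def toDef1 (M : Type*) (s : Set M) : Set (Fin 1 → M) := {x | x 0 ∈ s}

/-- Algebraic closure: `b ∈ acl(Z)` iff `b` belongs to some finite `Z`-definable set. -/
def inAcl {M : Type*} [L.Structure M] (Z : Set M) (b : M) : Prop :=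
  ∃ s : Set M, b ∈ s ∧ s.Finite ∧ Z.Definable L (toDef1 M s)

-- ========== auxiliary lemmas ==========

section General

variable {N : Type*} [L.Structure N]

def RelSet (A : Set N) : Set (Σ n, L.Relations n × (Fin n → N)) :=
  {p | (∀ i, p.2.2 i ∈ A) ∧ Language.Structure.RelMap p.2.1 p.2.2}

lemma delta_def (A : Set N) :
    delta L A = (A.ncard : ℤ) - ((RelSet L A).ncard : ℤ) := rfl

lemma RelSet_mono {A B : Set N} (h : A ⊆ B) : RelSet L A ⊆ RelSet L B :=
  fun _ hp => ⟨fun i => h (hp.1 i), hp.2⟩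

lemma RelSet_inter (A B : Set N) : RelSet L (A ∩ B) = RelSet L A ∩ RelSet L B := by
  ext p
  constructor
  · exact fun hp => ⟨⟨fun i => (hp.1 i).1, hp.2⟩, ⟨fun i => (hp.1 i).2, hp.2⟩⟩
  · exact fun hp => ⟨fun i => ⟨(hp.1.1 i), (hp.2.1 i)⟩, hp.1.2⟩

lemma finite_sigma (N : Type*) [Finite N] [Finite (Σ n, L.Relations n)] :
    Finite (Σ n, L.Relations n × (Fin n → N)) := by
  have e : (Σ n, L.Relations n × (Fin n → N)) ≃ (Σ q : (Σ n, L.Relations n), (Fin q.1 → N)) :=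
    { toFun := fun p => ⟨⟨p.1, p.2.1⟩, p.2.2⟩
      invFun := fun q => ⟨q.1.1, (q.1.2, q.2)⟩
      left_inv := fun p => rfl
      right_inv := fun q => rfl }
  exact Finite.of_equiv _ e.symm

variable {N' : Type*} [L.Structure N'] [Finite N'] [Finite (Σ n, L.Relations n × (Fin n → N'))]

set_option linter.unusedSectionVars false

lemma delta_submod (A B : Set N') :
    delta L (A ∪ B) + delta L (A ∩ B) ≤ delta L A + delta L B := by
  have hcard : (A ∪ B).ncard + (A ∩ B).ncard = A.ncard + B.ncard :=
    Set.ncard_union_add_ncard_inter A B (Set.toFinite A) (Set.toFinite B)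
  have hrel : (RelSet L A).ncard + (RelSet L B).ncard
      ≤ (RelSet L (A ∪ B)).ncard + (RelSet L (A ∩ B)).ncard := by
    have h1 : (RelSet L A ∪ RelSet L B).ncard + (RelSet L A ∩ RelSet L B).ncard
        = (RelSet L A).ncard + (RelSet L B).ncard :=
      Set.ncard_union_add_ncard_inter _ _ (Set.toFinite _) (Set.toFinite _)
    have h2 : (RelSet L A ∪ RelSet L B).ncard ≤ (RelSet L (A ∪ B)).ncard :=
      Set.ncard_le_ncard (union_subset (RelSet_mono L subset_union_left)
        (RelSet_mono L subset_union_right)) (Set.toFinite _)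
    rw [RelSet_inter]
    omega
  rw [delta_def, delta_def, delta_def, delta_def]
  push_cast at hcard hrel ⊢
  linarith

lemma delta_insert_le (A : Set N') (x : N') : delta L (insert x A) ≤ delta L A + 1 := by
  have hcard : (insert x A).ncard ≤ A.ncard + 1 := Set.ncard_insert_le x A
  have hrel : (RelSet L A).ncard ≤ (RelSet L (insert x A)).ncard :=
    Set.ncard_le_ncard (RelSet_mono L (subset_insert x A)) (Set.toFinite _)
  rw [delta_def, delta_def]
  push_cast at hcard hrel ⊢
  linarith

lemma delta_union_le (A B : Set N') : delta L (A ∪ B) ≤ delta L A + (B \ A).ncard := by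
  have hcard : (A ∪ B).ncard ≤ A.ncard + (B \ A).ncard := by
    rw [← Set.union_diff_self, Set.ncard_union_eq disjoint_sdiff_right
      (Set.toFinite _) (Set.toFinite _)]
  have hrel : (RelSet L A).ncard ≤ (RelSet L (A ∪ B)).ncard :=
    Set.ncard_le_ncard (RelSet_mono L subset_union_left) (Set.toFinite _)
  rw [delta_def, delta_def]
  push_cast at hcard hrel ⊢
  linarith

lemma ss_inter {U B Z : Set N'} (hU : SelfSuffIn L U B) (hZ : Z ⊆ B) :
    SelfSuffIn L (U ∩ Z) Z := by
  refine ⟨inter_subset_right, fun W hW hWZ _ => ?_⟩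
  have hUW : U ∩ W = U ∩ Z := by
    apply subset_antisymm
    · exact inter_subset_inter_right U hWZ
    · exact subset_inter inter_subset_left hW.1
  obtain ⟨w, hwW, hwUZ⟩ := exists_of_ssubset hW
  have hwU : w ∉ U := fun hwU => hwUZ (hUW ▸ ⟨hwU, hwW⟩ : w ∈ U ∩ Z)
  have hss : U ⊂ U ∪ W :=
    ⟨subset_union_left, fun habs => hwU (habs (mem_union_right U hwW))⟩
  have h1 : delta L U < delta L (U ∪ W) :=
    hU.2 (U ∪ W) hss (union_subset hU.1 (hWZ.trans hZ)) (Set.toFinite _)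
  have h2 := delta_submod L U W
  rw [hUW] at h2
  linarith

lemma ss_delta_le {U B Z : Set N'} (hU : SelfSuffIn L U B) (hUZ : U ⊆ Z) (hZ : Z ⊆ B) :
    delta L U ≤ delta L Z := by
  rcases eq_or_ssubset_of_subset hUZ with h | h
  · rw [h]
  · exact le_of_lt (hU.2 Z h hZ (Set.toFinite _))

lemma clIn_spec {Y B : Set N'} (hYB : Y ⊆ B) :
    Y ⊆ clIn L Y B ∧ clIn L Y B ⊆ B ∧ SelfSuffIn L (clIn L Y B) B ∧
      ∀ Z, Y ⊆ Z → Z ⊆ B → delta L (clIn L Y B) ≤ delta L Z := by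
  obtain ⟨W, hWmem, hWmin⟩ := Set.exists_min_image {Z : Set N' | Y ⊆ Z ∧ Z ⊆ B}
      (fun Z => ((B.ncard : ℤ) + 1) * delta L Z - (Z.ncard : ℤ)) (Set.toFinite _)
      ⟨B, hYB, subset_rfl⟩
  obtain ⟨hYW, hWB⟩ := hWmem
  have hWcard : (W.ncard : ℤ) ≤ (B.ncard : ℤ) := by
    exact_mod_cast Set.ncard_le_ncard hWB (Set.toFinite _)
  have hWδ : ∀ Z, Y ⊆ Z → Z ⊆ B → delta L W ≤ delta L Z := by
    intro Z hYZ hZB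
    by_contra habs
    push_neg at habs
    have h1 := hWmin Z ⟨hYZ, hZB⟩
    have hZ0 : (0 : ℤ) ≤ (Z.ncard : ℤ) := Int.ofNat_nonneg _
    have hB0 : (0 : ℤ) ≤ (B.ncard : ℤ) := Int.ofNat_nonneg _
    have h3 : delta L Z + 1 ≤ delta L W := by omega
    nlinarith [h1]
  have hWss : SelfSuffIn L W B := by
    refine ⟨hWB, fun Z hZ hZB _ => ?_⟩
    have hle : delta L W ≤ delta L Z := hWδ Z (hYW.trans hZ.1) hZB
    rcases lt_or_eq_of_le hle with h | h
    · exact h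
    · exfalso
      have h1 := hWmin Z ⟨hYW.trans hZ.1, hZB⟩
      have h2 : W.ncard < Z.ncard := Set.ncard_lt_ncard hZ (Set.toFinite _)
      rw [← h] at h1
      omega
  have hWsub : ∀ V, Y ⊆ V → SelfSuffIn L V B → W ⊆ V := by
    intro V hYV hV
    have hVW : SelfSuffIn L (V ∩ W) W := ss_inter L hV hWB
    have hle : delta L W ≤ delta L (V ∩ W) :=
      hWδ _ (subset_inter hYV hYW) (inter_subset_right.trans hWB)
    by_contra habs
    have hss : V ∩ W ⊂ W :=
      ⟨inter_subset_right, fun h => habs (fun x hx => (h hx).1)⟩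
    have := hVW.2 W hss subset_rfl (Set.toFinite _)
    omega
  have hcl : clIn L Y B = W := by
    apply subset_antisymm
    · exact sInter_subset_of_mem ⟨hYW, hWss⟩
    · exact subset_sInter fun V hV => hWsub V hV.1 hV.2
  rw [hcl]
  exact ⟨hYW, hWB, hWss, hWδ⟩

lemma dIn_le {Y Z B : Set N'} (hYB : Y ⊆ B) (hYZ : Y ⊆ Z) (hZB : Z ⊆ B) :
    dIn L Y B ≤ delta L Z :=
  (clIn_spec L hYB).2.2.2 Z hYZ hZB

lemma dIn_eq_of_ss {A B : Set N'} (h : SelfSuffIn L A B) : dIn L A B = delta L A := by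
  have hcl : clIn L A B = A := by
    apply subset_antisymm
    · exact sInter_subset_of_mem ⟨subset_rfl, h⟩
    · exact subset_sInter fun V hV => hV.1
  rw [dIn, hcl]

lemma dIn_insert_le {Y B : Set N'} (hYB : Y ⊆ B) {x : N'} (hx : x ∈ B) :
    dIn L (insert x Y) B ≤ dIn L Y B + 1 := by
  obtain ⟨h1, h2, _, _⟩ := clIn_spec L hYB
  calc dIn L (insert x Y) B ≤ delta L (insert x (clIn L Y B)) :=
        dIn_le L (insert_subset hx hYB) (insert_subset_insert h1)
          (insert_subset hx h2)
    _ ≤ dIn L Y B + 1 := delta_insert_le L _ x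

lemma dIn_mono {Y₁ Y₂ B : Set N'} (h12 : Y₁ ⊆ Y₂) (h2B : Y₂ ⊆ B) :
    dIn L Y₁ B ≤ dIn L Y₂ B := by
  obtain ⟨h1, h2, _, _⟩ := clIn_spec L h2B
  exact dIn_le L (h12.trans h2B) (h12.trans h1) h2

lemma delta_ge_dIn {Y B : Set N'} (hYB : Y ⊆ B) : dIn L Y B ≤ delta L Y :=
  dIn_le L hYB subset_rfl hYB

end General

lemma g_nonneg {f g : ℝ → ℝ} (hf : IsGoodFun f g) {x : ℝ} (hx : 0 ≤ x) : 0 ≤ g x := by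
  have h := hf.rightDeriv x hx
  rw [hasDerivWithinAt_iff_tendsto_slope] at h
  have heq : Ici x \ {x} = Ioi x := Set.Ici_sdiff_left
  rw [heq] at h
  have hev : ∀ᶠ y in nhdsWithin x (Ioi x), 0 ≤ slope f x y := by
    filter_upwards [self_mem_nhdsWithin] with y hy
    have hxy : x < y := hy
    have hfx : f x ≤ f y := le_of_lt (hf.mono hx (le_of_lt (lt_of_le_of_lt hx hxy)) hxy)
    have hs : slope f x y = (f y - f x) / (y - x) := slope_def_field f x y
    rw [hs]
    exact div_nonneg (by linarith) (by linarith)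
  exact ge_of_tendsto h hev

lemma mvt_good {f g : ℝ → ℝ} (hf : IsGoodFun f g) {x y : ℝ} (hx : 0 ≤ x) (hxy : x ≤ y) :
    f y ≤ f x + g x * (y - x) := by
  have hcont : ContinuousOn f (Icc x y) :=
    hf.cont.mono (fun z hz => le_trans hx hz.1)
  have hderiv : ∀ z ∈ Ico x y, HasDerivWithinAt f (g z) (Ici z) z :=
    fun z hz => hf.rightDeriv z (le_trans hx hz.1)
  have hbound : ∀ z ∈ Ico x y, ‖g z‖ ≤ g x := by
    intro z hz
    rw [Real.norm_eq_abs, abs_of_nonneg (g_nonneg hf (le_trans hx hz.1))]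
    exact hf.anti hx (le_trans hx hz.1) hz.1
  have h := norm_image_sub_le_of_norm_deriv_right_le_segment hcont hderiv hbound y
    ⟨hxy, le_refl y⟩
  rw [Real.norm_eq_abs] at h
  have h2 := abs_le.mp h
  linarith [h2.2]

lemma real_core {w k l e m : ℝ} (hl : 0 ≤ l) (hlk : l ≤ k) (he : 0 ≤ e)
    (hm : 0 ≤ m) (hwl : w + l ≤ 2 * (m + 1)) (hone : w + l = 0 ∨ 1 ≤ e) :
    (w + k) / (2 * (m + 1)) ≤ e + (k - l) := by
  have h2 : (0 : ℝ) < 2 * (m + 1) := by linarith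
  have hsplit : (w + k) / (2 * (m + 1))
      = (w + l) / (2 * (m + 1)) + (k - l) / (2 * (m + 1)) := by ring
  have hkl : (k - l) / (2 * (m + 1)) ≤ k - l :=
    div_le_self (by linarith) (by linarith)
  rcases hone with h | h
  · have h0 : (w + l) / (2 * (m + 1)) = 0 := by rw [h]; simp
    linarith
  · have h1 : (w + l) / (2 * (m + 1)) ≤ 1 := by
      rw [div_le_one h2]; linarith
    linarith




/-- **Lemma 4.8 (technical lemma)**: let `A ≤ C, T ∈ K_f` (with `A ≠ C, T`), let `E` be
the free amalgam of `C` and `T` over `A`, let `t₁,…,t_r ∈ T∖A` be `d`-independent over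
`A` and `c ∈ C∖A`, and let `F = E ∪ {s₁,…,s_r}` with additional relations `R(c, sᵢ, tᵢ)`.
Then `A ∪ {s₁,…,s_r} ≤ F`, `C ≤ F`, `T ≤ F`, and `F ∈ K_f`. -/
theorem free_amalgam_links
    (L : FirstOrder.Language) [L.IsRelational]
    [Finite (Σ n, L.Relations n)] (R3 : L.Relations 3)
    (f g : ℝ → ℝ) (hf : IsGoodFun f g)
    (hg : ∀ x ∈ Set.Ici (0 : ℝ), g x ≤ 1 / (2 * (x + 1)))
    (F : Type) [Fintype F] [L.Structure F]
    (r : ℕ) (A C T : Set F) (c : F) (t s : Fin r → F)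
    (hAC : SelfSuffIn L A C) (hAT : SelfSuffIn L A T)
    (hACne : A ≠ C) (hATne : A ≠ T)
    (hCKf : ∀ X : Set F, X ⊆ C → f X.ncard ≤ (delta L X : ℝ))
    (hTKf : ∀ X : Set F, X ⊆ T → f X.ncard ≤ (delta L X : ℝ))
    (hCT : C ∩ T = A)
    (hc : c ∈ C \ A)
    (ht : ∀ i : Fin r, t i ∈ T \ A)
    (htind : dIn L (A ∪ Set.range t) T - dIn L A T = r)
    (hs_inj : Function.Injective s)
    (hs_new : ∀ i : Fin r, s i ∉ C ∪ T)
    (hunion : (Set.univ : Set F) = C ∪ T ∪ Set.range s)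
    (hfree : ∀ (nn : ℕ) (Rel : L.Relations nn) (x : Fin nn → F),
      Language.Structure.RelMap Rel x →
      (Set.range x ⊆ C ∨ Set.range x ⊆ T ∨
        ∃ i : Fin r, (⟨nn, (Rel, x)⟩ : Σ m, L.Relations m × (Fin m → F)) =
          ⟨3, (R3, ![c, s i, t i])⟩))
    (hnew : ∀ i : Fin r, Language.Structure.RelMap R3 ![c, s i, t i]) :
    SelfSuffIn L (A ∪ Set.range s) Set.univ ∧
    SelfSuffIn L C Set.univ ∧
    SelfSuffIn L T Set.univ ∧
    InKf L f F := by
  haveI : Finite F := Finite.of_fintype F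
  haveI hfinP : Finite (Σ n, L.Relations n × (Fin n → F)) := finite_sigma L F
  have hAsubC : A ⊆ C := hAC.1
  have hAsubT : A ⊆ T := hAT.1
  have htT : ∀ i, t i ∈ T := fun i => (ht i).1
  have htA : ∀ i, t i ∉ A := fun i => (ht i).2
  have hsC : ∀ i, s i ∉ C := fun i h => hs_new i (Or.inl h)
  have hsT : ∀ i, s i ∉ T := fun i h => hs_new i (Or.inr h)
  have hcC : c ∈ C := hc.1
  have hcA : c ∉ A := hc.2
  have hcS : c ∉ Set.range s := by rintro ⟨i, rfl⟩; exact hsC i hcC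
  have hranT : ∀ Y : Set (Fin r), A ∪ t '' Y ⊆ T := fun Y =>
    union_subset hAsubT (by rintro x ⟨i, _, rfl⟩; exact htT i)
  -- dimension facts in T
  have hdA : dIn L A T = delta L A := dIn_eq_of_ss L hAT
  have hdAt : dIn L (A ∪ Set.range t) T = delta L A + r := by
    rw [hdA] at htind; omega
  have hrem : ∀ J : Finset (Fin r),
      dIn L (A ∪ Set.range t) T - J.card ≤ dIn L (A ∪ t '' (↑(Jᶜ) : Set (Fin r))) T := by
    intro J
    induction J using Finset.induction_on with
    | empty => simp
    | @insert a J ha ih =>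
      have hsub : A ∪ t '' (↑(Jᶜ) : Set (Fin r)) ⊆
          insert (t a) (A ∪ t '' (↑((insert a J)ᶜ) : Set (Fin r))) := by
        rintro x (hx | ⟨i, hi, rfl⟩)
        · exact Set.mem_insert_iff.mpr (Or.inr (Or.inl hx))
        · by_cases hia : i = a
          · exact Set.mem_insert_iff.mpr (Or.inl (by rw [hia]))
          · refine Set.mem_insert_iff.mpr (Or.inr (Or.inr ⟨i, ?_, rfl⟩))
            simp only [Finset.coe_compl, Set.mem_compl_iff, Finset.mem_coe,
              Finset.mem_insert] at hi ⊢
            tauto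
      have h1 : dIn L (A ∪ t '' (↑(Jᶜ) : Set (Fin r))) T ≤
          dIn L (insert (t a) (A ∪ t '' (↑((insert a J)ᶜ) : Set (Fin r)))) T :=
        dIn_mono L hsub (insert_subset (htT a) (hranT _))
      have h2 : dIn L (insert (t a) (A ∪ t '' (↑((insert a J)ᶜ) : Set (Fin r)))) T ≤
          dIn L (A ∪ t '' (↑((insert a J)ᶜ) : Set (Fin r))) T + 1 :=
        dIn_insert_le L (hranT _) (htT a)
      have hc' : (insert a J).card = J.card + 1 := Finset.card_insert_of_notMem ha
      omega
  have hKeyT : ∀ (I : Set (Fin r)) (Z : Set F), A ⊆ Z → (∀ i ∈ I, t i ∈ Z) → Z ⊆ T →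
      delta L A + (I.ncard : ℤ) ≤ delta L Z := by
    intro I Z hAZ htZ hZT
    have hIfin : I.Finite := Set.toFinite I
    have h1 := hrem (hIfin.toFinset)ᶜ
    rw [compl_compl, Set.Finite.coe_toFinset] at h1
    have hcardc : ((hIfin.toFinset)ᶜ).card = r - hIfin.toFinset.card := by
      rw [Finset.card_compl]; simp
    have hIr : hIfin.toFinset.card ≤ r := by
      simpa using Finset.card_le_univ hIfin.toFinset
    have hInc : I.ncard = hIfin.toFinset.card := Set.ncard_eq_toFinset_card I hIfin
    have h2 : dIn L (A ∪ t '' I) T ≤ delta L Z :=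
      dIn_le L (hranT _)
        (union_subset hAZ (by rintro x ⟨i, hi, rfl⟩; exact htZ i hi)) hZT
    rw [hdAt] at h1
    omega
  -- t is injective
  have htinj : Function.Injective t := by
    intro i j hij
    by_contra hne
    have hran : Set.range t = t '' ({j}ᶜ : Set (Fin r)) := by
      apply subset_antisymm
      · rintro x ⟨x', rfl⟩
        by_cases hx' : x' = j
        · exact ⟨i, by simp [hne], by rw [hx', hij]⟩
        · exact ⟨x', by simp [hx'], rfl⟩
      · rintro x ⟨x', _, rfl⟩; exact ⟨x', rfl⟩
    have hr1 : 0 < r := Fin.pos i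
    have hcard1 : (Set.range t).ncard ≤ r - 1 := by
      rw [hran]
      have h1 : (t '' ({j}ᶜ : Set (Fin r))).ncard ≤ ({j}ᶜ : Set (Fin r)).ncard :=
        Set.ncard_image_le (Set.toFinite _)
      have h2 : ({j}ᶜ : Set (Fin r)).ncard = r - 1 := by
        rw [Set.compl_eq_univ_diff, Set.ncard_diff (Set.subset_univ _), Set.ncard_univ,
          Set.ncard_singleton]
        simp
      omega
    have h3 : dIn L (A ∪ Set.range t) T ≤ delta L (A ∪ Set.range t) := by
      have := delta_ge_dIn L (B := T) (Y := A ∪ Set.range t) ?_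
      · exact this
      · have : A ∪ t '' (Set.univ : Set (Fin r)) ⊆ T := hranT _
        rwa [Set.image_univ] at this
    have h4 := delta_union_le L A (Set.range t)
    have h5 : ((Set.range t) \ A).ncard ≤ r - 1 :=
      le_trans (Set.ncard_le_ncard diff_subset (Set.toFinite _)) hcard1
    rw [hdAt] at h3
    omega
  -- decomposition of delta over the amalgam
  have hACTX : ∀ X : Set F, (X ∩ C) ∩ (X ∩ T) = X ∩ A := by
    intro X; rw [← hCT]; ext x; simp only [mem_inter_iff]; tauto
  have hXeq : ∀ X : Set F, (X ∩ C) ∪ (X ∩ T) ∪ (X ∩ Set.range s) = X := by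
    intro X
    rw [← Set.inter_union_distrib_left, ← Set.inter_union_distrib_left, ← hunion,
      Set.inter_univ]
  have hXdisj : ∀ X : Set F, Disjoint ((X ∩ C) ∪ (X ∩ T)) (X ∩ Set.range s) := by
    intro X
    rw [Set.disjoint_left]
    rintro x (⟨-, hx⟩ | ⟨-, hx⟩) ⟨-, i, rfl⟩
    · exact hsC i hx
    · exact hsT i hx
  have hcard : ∀ X : Set F, (X.ncard : ℤ) + ((X ∩ A).ncard : ℤ)
      = ((X ∩ C).ncard : ℤ) + ((X ∩ T).ncard : ℤ) + ((X ∩ Set.range s).ncard : ℤ) := by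
    intro X
    have h1 := Set.ncard_union_add_ncard_inter (X ∩ C) (X ∩ T) (Set.toFinite _) (Set.toFinite _)
    rw [hACTX X] at h1
    have h2 : (((X ∩ C) ∪ (X ∩ T)) ∪ (X ∩ Set.range s)).ncard
        = ((X ∩ C) ∪ (X ∩ T)).ncard + (X ∩ Set.range s).ncard :=
      Set.ncard_union_eq (hXdisj X) (Set.toFinite _) (Set.toFinite _)
    rw [hXeq X] at h2
    omega
  have hlk_notin : ∀ (i : Fin r) (Y : Set F), s i ∉ Y →
      (⟨3, (R3, ![c, s i, t i])⟩ : Σ n, L.Relations n × (Fin n → F)) ∉ RelSet L Y := by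
    intro i Y hY hmem
    exact hY (by simpa using hmem.1 1)
  have hdec : ∀ X : Set F,
      delta L X + delta L (X ∩ A) + (({i : Fin r | c ∈ X ∧ s i ∈ X ∧ t i ∈ X}).ncard : ℤ)
      = delta L (X ∩ C) + delta L (X ∩ T) + ((X ∩ Set.range s).ncard : ℤ) := by
    intro X
    have hRX : RelSet L X = (RelSet L (X ∩ C) ∪ RelSet L (X ∩ T)) ∪
        (fun i : Fin r => (⟨3, (R3, ![c, s i, t i])⟩ : Σ n, L.Relations n × (Fin n → F))) ''
          {i : Fin r | c ∈ X ∧ s i ∈ X ∧ t i ∈ X} := by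
      ext p
      constructor
      · rintro ⟨hmem, hrel⟩
        rcases hfree p.1 p.2.1 p.2.2 hrel with hC' | hT' | ⟨i, hpi⟩
        · exact Or.inl (Or.inl ⟨fun j => ⟨hmem j, hC' ⟨j, rfl⟩⟩, hrel⟩)
        · exact Or.inl (Or.inr ⟨fun j => ⟨hmem j, hT' ⟨j, rfl⟩⟩, hrel⟩)
        · have hp : p = ⟨3, (R3, ![c, s i, t i])⟩ := hpi
          subst hp
          refine Or.inr ⟨i, ⟨?_, ?_, ?_⟩, rfl⟩
          · simpa using hmem 0
          · simpa using hmem 1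
          · simpa using hmem 2
      · rintro ((⟨hm, hr⟩ | ⟨hm, hr⟩) | ⟨i, hi, rfl⟩)
        · exact ⟨fun j => (hm j).1, hr⟩
        · exact ⟨fun j => (hm j).1, hr⟩
        · refine ⟨?_, hnew i⟩
          intro j
          fin_cases j
          · simpa using hi.1
          · simpa using hi.2.1
          · simpa using hi.2.2
    have hdisj : Disjoint (RelSet L (X ∩ C) ∪ RelSet L (X ∩ T))
        ((fun i : Fin r => (⟨3, (R3, ![c, s i, t i])⟩ : Σ n, L.Relations n × (Fin n → F))) ''
          {i : Fin r | c ∈ X ∧ s i ∈ X ∧ t i ∈ X}) := by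
      rw [Set.disjoint_right]
      rintro p ⟨i, hi, rfl⟩ (h | h)
      · exact hlk_notin i (X ∩ C) (fun h' => hsC i h'.2) h
      · exact hlk_notin i (X ∩ T) (fun h' => hsT i h'.2) h
    have h1 : (RelSet L X).ncard = (RelSet L (X ∩ C) ∪ RelSet L (X ∩ T)).ncard +
        ((fun i : Fin r => (⟨3, (R3, ![c, s i, t i])⟩ : Σ n, L.Relations n × (Fin n → F))) ''
          {i : Fin r | c ∈ X ∧ s i ∈ X ∧ t i ∈ X}).ncard := by
      rw [hRX]; exact Set.ncard_union_eq hdisj (Set.toFinite _) (Set.toFinite _)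
    have h2 := Set.ncard_union_add_ncard_inter (RelSet L (X ∩ C)) (RelSet L (X ∩ T))
      (Set.toFinite _) (Set.toFinite _)
    have h3 : RelSet L (X ∩ C) ∩ RelSet L (X ∩ T) = RelSet L (X ∩ A) := by
      rw [← RelSet_inter, hACTX X]
    rw [h3] at h2
    have h4 : ((fun i : Fin r => (⟨3, (R3, ![c, s i, t i])⟩ : Σ n, L.Relations n × (Fin n → F))) ''
        {i : Fin r | c ∈ X ∧ s i ∈ X ∧ t i ∈ X}).ncard
        = ({i : Fin r | c ∈ X ∧ s i ∈ X ∧ t i ∈ X}).ncard := by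
      apply Set.ncard_image_of_injOn
      intro i _ j _ hij
      have h5 := eq_of_heq (Sigma.mk.inj_iff.mp hij).2
      have h6 := congrFun (congrArg Prod.snd h5) 1
      simp at h6
      exact hs_inj h6
    have hc' := hcard X
    rw [delta_def, delta_def, delta_def, delta_def]
    omega
  -- ncard of S
  have hScard : (Set.range s).ncard = r := by
    rw [← Set.image_univ, Set.ncard_image_of_injOn (hs_inj.injOn), Set.ncard_univ,
      Nat.card_eq_fintype_card, Fintype.card_fin]
  -- the counting of links is bounded by the number of s-points present
  have hlk2 : ∀ X : Set F, ({i : Fin r | c ∈ X ∧ s i ∈ X ∧ t i ∈ X}).ncard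
      ≤ (X ∩ Set.range s).ncard := by
    intro X
    have himg : s '' {i : Fin r | c ∈ X ∧ s i ∈ X ∧ t i ∈ X} ⊆ X ∩ Set.range s := by
      rintro x ⟨i, hi, rfl⟩; exact ⟨hi.2.1, i, rfl⟩
    calc ({i : Fin r | c ∈ X ∧ s i ∈ X ∧ t i ∈ X}).ncard
        = (s '' {i : Fin r | c ∈ X ∧ s i ∈ X ∧ t i ∈ X}).ncard :=
          (Set.ncard_image_of_injOn (hs_inj.injOn)).symm
      _ ≤ (X ∩ Set.range s).ncard := Set.ncard_le_ncard himg (Set.toFinite _)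
  -- delta (A ∪ S) = delta A + r
  have hASC : (A ∪ Set.range s) ∩ C = A := by
    ext x
    constructor
    · rintro ⟨h | ⟨i, rfl⟩, hxC⟩
      · exact h
      · exact absurd hxC (hsC i)
    · exact fun h => ⟨Or.inl h, hAsubC h⟩
  have hAST : (A ∪ Set.range s) ∩ T = A := by
    ext x
    constructor
    · rintro ⟨h | ⟨i, rfl⟩, hxT⟩
      · exact h
      · exact absurd hxT (hsT i)
    · exact fun h => ⟨Or.inl h, hAsubT h⟩
  have hASA : (A ∪ Set.range s) ∩ A = A := inter_eq_self_of_subset_right subset_union_left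
  have hASS : (A ∪ Set.range s) ∩ Set.range s = Set.range s :=
    inter_eq_self_of_subset_right subset_union_right
  have hIXAS : {i : Fin r | c ∈ A ∪ Set.range s ∧ s i ∈ A ∪ Set.range s ∧
      t i ∈ A ∪ Set.range s} = ∅ := by
    apply Set.eq_empty_iff_forall_notMem.mpr
    rintro i ⟨hc' , -, -⟩
    rcases hc' with h | h
    · exact hcA h
    · exact hcS h
  have hdAS : delta L (A ∪ Set.range s) = delta L A + r := by
    have h := hdec (A ∪ Set.range s)
    rw [hASC, hAST, hASA, hASS, hIXAS, Set.ncard_empty, hScard] at h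
    omega
  -- ============ Part 1 ============
  have part1 : SelfSuffIn L (A ∪ Set.range s) Set.univ := by
    refine ⟨subset_univ _, fun X hX _ _ => ?_⟩
    have hAX : A ⊆ X := subset_union_left.trans hX.subset
    have hSX : Set.range s ⊆ X := subset_union_right.trans hX.subset
    have hXA : X ∩ A = A := inter_eq_self_of_subset_right hAX
    have hXS : X ∩ Set.range s = Set.range s := inter_eq_self_of_subset_right hSX
    have hdX := hdec X
    rw [hXA, hXS, hScard] at hdX
    have heC : delta L A ≤ delta L (X ∩ C) :=
      ss_delta_le L hAC (subset_inter hAX hAsubC) inter_subset_right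
    have heT : delta L A + (({i : Fin r | c ∈ X ∧ s i ∈ X ∧ t i ∈ X}).ncard : ℤ)
        ≤ delta L (X ∩ T) :=
      hKeyT _ (X ∩ T) (subset_inter hAX hAsubT) (fun i hi => ⟨hi.2.2, htT i⟩)
        inter_subset_right
    rw [hdAS]
    by_cases hcX : c ∈ X
    · have heC' : delta L A < delta L (X ∩ C) :=
        hAC.2 _ ⟨subset_inter hAX hAsubC, fun habs => hcA (habs ⟨hcX, hcC⟩)⟩
          inter_subset_right (Set.toFinite _)
      omega
    · have hIX0 : {i : Fin r | c ∈ X ∧ s i ∈ X ∧ t i ∈ X} = ∅ :=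
        Set.eq_empty_iff_forall_notMem.mpr (fun i hi => hcX hi.1)
      rw [hIX0, Set.ncard_empty] at hdX
      obtain ⟨x, hxX, hxAS⟩ := exists_of_ssubset hX
      have hxU : x ∈ C ∪ T ∪ Set.range s := by rw [← hunion]; trivial
      rcases hxU with (hxC | hxT) | hxS
      · have heC' : delta L A < delta L (X ∩ C) :=
          hAC.2 _ ⟨subset_inter hAX hAsubC,
            fun habs => hxAS (Or.inl (habs ⟨hxX, hxC⟩))⟩ inter_subset_right (Set.toFinite _)
        omega
      · have heT' : delta L A < delta L (X ∩ T) :=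
          hAT.2 _ ⟨subset_inter hAX hAsubT,
            fun habs => hxAS (Or.inl (habs ⟨hxX, hxT⟩))⟩ inter_subset_right (Set.toFinite _)
        omega
      · exact absurd (Or.inr hxS) hxAS
  -- ============ Part 2 ============
  have part2 : SelfSuffIn L C Set.univ := by
    refine ⟨subset_univ _, fun X hX _ _ => ?_⟩
    have hCX : C ⊆ X := hX.subset
    have hAX : A ⊆ X := hAsubC.trans hCX
    have hXC : X ∩ C = C := inter_eq_self_of_subset_right hCX
    have hXA : X ∩ A = A := inter_eq_self_of_subset_right hAX
    have hdX := hdec X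
    rw [hXC, hXA] at hdX
    have heT : delta L A + (({i : Fin r | c ∈ X ∧ s i ∈ X ∧ t i ∈ X}).ncard : ℤ)
        ≤ delta L (X ∩ T) :=
      hKeyT _ (X ∩ T) (subset_inter hAX hAsubT) (fun i hi => ⟨hi.2.2, htT i⟩)
        inter_subset_right
    have hlk2X := hlk2 X
    obtain ⟨x, hxX, hxC⟩ := exists_of_ssubset hX
    have hxU : x ∈ C ∪ T ∪ Set.range s := by rw [← hunion]; trivial
    rcases hxU with (h | hxT) | hxS
    · exact absurd h hxC
    · have hxA : x ∉ A := fun h => hxC (hAsubC h)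
      have heT' : delta L A < delta L (X ∩ T) :=
        hAT.2 _ ⟨subset_inter hAX hAsubT, fun habs => hxA (habs ⟨hxX, hxT⟩)⟩
          inter_subset_right (Set.toFinite _)
      omega
    · have hk1 : 0 < (X ∩ Set.range s).ncard :=
        (Set.ncard_pos (Set.toFinite _)).mpr ⟨x, hxX, hxS⟩
      omega
  -- ============ Part 3 ============
  have part3 : SelfSuffIn L T Set.univ := by
    refine ⟨subset_univ _, fun X hX _ _ => ?_⟩
    have hTX : T ⊆ X := hX.subset
    have hAX : A ⊆ X := hAsubT.trans hTX
    have hXT : X ∩ T = T := inter_eq_self_of_subset_right hTX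
    have hXA : X ∩ A = A := inter_eq_self_of_subset_right hAX
    have hdX := hdec X
    rw [hXT, hXA] at hdX
    have heC : delta L A ≤ delta L (X ∩ C) :=
      ss_delta_le L hAC (subset_inter hAX hAsubC) inter_subset_right
    have hlk2X := hlk2 X
    by_cases hcX : c ∈ X
    · have heC' : delta L A < delta L (X ∩ C) :=
        hAC.2 _ ⟨subset_inter hAX hAsubC, fun habs => hcA (habs ⟨hcX, hcC⟩)⟩
          inter_subset_right (Set.toFinite _)
      omega
    · have hIX0 : {i : Fin r | c ∈ X ∧ s i ∈ X ∧ t i ∈ X} = ∅ :=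
        Set.eq_empty_iff_forall_notMem.mpr (fun i hi => hcX hi.1)
      rw [hIX0, Set.ncard_empty] at hdX
      obtain ⟨x, hxX, hxT⟩ := exists_of_ssubset hX
      have hxU : x ∈ C ∪ T ∪ Set.range s := by rw [← hunion]; trivial
      rcases hxU with (hxC | h) | hxS
      · have hxA : x ∉ A := fun h => hxT (hAsubT h)
        have heC' : delta L A < delta L (X ∩ C) :=
          hAC.2 _ ⟨subset_inter hAX hAsubC, fun habs => hxA (habs ⟨hxX, hxC⟩)⟩
            inter_subset_right (Set.toFinite _)
        omega
      · exact absurd h hxT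
      · have hk1 : 0 < (X ∩ Set.range s).ncard :=
          (Set.ncard_pos (Set.toFinite _)).mpr ⟨x, hxX, hxS⟩
        omega
  -- ============ Part 4 ============
  have part4 : InKf L f F := by
    intro X _
    have hdX := hdec X
    have hcX := hcard X
    have hap : (X ∩ A).ncard ≤ (X ∩ C).ncard :=
      Set.ncard_le_ncard (fun x hx => ⟨hx.1, hAsubC hx.2⟩) (Set.toFinite _)
    have haq : (X ∩ A).ncard ≤ (X ∩ T).ncard :=
      Set.ncard_le_ncard (fun x hx => ⟨hx.1, hAsubT hx.2⟩) (Set.toFinite _)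
    have hfp : f ((X ∩ C).ncard : ℝ) ≤ (delta L (X ∩ C) : ℝ) := hCKf _ inter_subset_right
    have hfq : f ((X ∩ T).ncard : ℝ) ≤ (delta L (X ∩ T) : ℝ) := hTKf _ inter_subset_right
    have hssC : SelfSuffIn L (X ∩ A) (X ∩ C) := by
      have h := ss_inter L hAC (inter_subset_right : X ∩ C ⊆ C)
      have heq : A ∩ (X ∩ C) = X ∩ A := by
        ext x; simp only [mem_inter_iff]; tauto
      rwa [heq] at h
    have hssT : SelfSuffIn L (X ∩ A) (X ∩ T) := by
      have h := ss_inter L hAT (inter_subset_right : X ∩ T ⊆ T)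
      have heq : A ∩ (X ∩ T) = X ∩ A := by
        ext x; simp only [mem_inter_iff]; tauto
      rwa [heq] at h
    have hsubAC : X ∩ A ⊆ X ∩ C := fun x hx => ⟨hx.1, hAsubC hx.2⟩
    have hsubAT : X ∩ A ⊆ X ∩ T := fun x hx => ⟨hx.1, hAsubT hx.2⟩
    have heC0 : delta L (X ∩ A) ≤ delta L (X ∩ C) := ss_delta_le L hssC hsubAC subset_rfl
    have heT0 : delta L (X ∩ A) ≤ delta L (X ∩ T) := ss_delta_le L hssT hsubAT subset_rfl
    have hlk2X := hlk2 X
    have hlq2 : ({i : Fin r | c ∈ X ∧ s i ∈ X ∧ t i ∈ X}).ncard + (X ∩ A).ncard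
        ≤ (X ∩ T).ncard := by
      have himg : t '' {i : Fin r | c ∈ X ∧ s i ∈ X ∧ t i ∈ X} ⊆ (X ∩ T) \ (X ∩ A) := by
        rintro x ⟨i, hi, rfl⟩
        exact ⟨⟨hi.2.2, htT i⟩, fun hmem => htA i hmem.2⟩
      have h1 : (t '' {i : Fin r | c ∈ X ∧ s i ∈ X ∧ t i ∈ X}).ncard
          = ({i : Fin r | c ∈ X ∧ s i ∈ X ∧ t i ∈ X}).ncard :=
        Set.ncard_image_of_injOn (htinj.injOn)
      have h2 : ((X ∩ T) \ (X ∩ A)).ncard = (X ∩ T).ncard - (X ∩ A).ncard :=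
        Set.ncard_diff hsubAT (Set.toFinite _)
      have h3 := Set.ncard_le_ncard himg (Set.toFinite _)
      omega
    have heTl : delta L (X ∩ A) + (({i : Fin r | c ∈ X ∧ s i ∈ X ∧ t i ∈ X}).ncard : ℤ)
        ≤ delta L (X ∩ T) := by
      have hsub := delta_submod L (X ∩ T) A
      have hTA : (X ∩ T) ∩ A = X ∩ A := by
        ext x
        constructor
        · rintro ⟨⟨h1, _⟩, h3⟩; exact ⟨h1, h3⟩
        · rintro ⟨h1, h3⟩; exact ⟨⟨h1, hAsubT h3⟩, h3⟩
      rw [hTA] at hsub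
      have hKey := hKeyT {i : Fin r | c ∈ X ∧ s i ∈ X ∧ t i ∈ X} ((X ∩ T) ∪ A)
        subset_union_right (fun i hi => Or.inl ⟨hi.2.2, htT i⟩)
        (union_subset inter_subset_right hAsubT)
      omega
    -- notation for the numeric part
    set a : ℕ := (X ∩ A).ncard
    set p : ℕ := (X ∩ C).ncard
    set q : ℕ := (X ∩ T).ncard
    set k : ℕ := (X ∩ Set.range s).ncard
    set l : ℕ := ({i : Fin r | c ∈ X ∧ s i ∈ X ∧ t i ∈ X}).ncard
    have hl_pos_c : 0 < l → c ∈ X := by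
      intro hpos
      obtain ⟨i, hi⟩ := (Set.ncard_pos (Set.toFinite _)).mp hpos
      exact hi.1
    rcases le_total p q with hpq | hpq
    · -- C-side is the smaller one; expand around q
      have hq0 : (0 : ℝ) ≤ (q : ℝ) := Nat.cast_nonneg q
      have hnq : (q : ℝ) ≤ (X.ncard : ℝ) := by
        have h : q ≤ X.ncard := by omega
        exact_mod_cast h
      have hmvt := mvt_good hf hq0 hnq
      have hgq := hg (q : ℝ) hq0
      have hprod : g q * ((X.ncard : ℝ) - q) ≤ ((X.ncard : ℝ) - q) / (2 * ((q : ℝ) + 1)) := by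
        calc g q * ((X.ncard : ℝ) - q)
            ≤ (1 / (2 * ((q : ℝ) + 1))) * ((X.ncard : ℝ) - q) :=
              mul_le_mul_of_nonneg_right hgq (by linarith)
          _ = ((X.ncard : ℝ) - q) / (2 * ((q : ℝ) + 1)) := by ring
      have hone : ((p : ℝ) - a) + l = 0 ∨
          1 ≤ (((delta L (X ∩ C) - delta L (X ∩ A)) : ℤ) : ℝ) := by
        by_cases hcase : p = a ∧ l = 0
        · left
          rw [hcase.1]
          have : (l : ℝ) = 0 := by exact_mod_cast hcase.2
          rw [this]; ring
        · right
          have hproper : X ∩ A ⊂ X ∩ C := by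
            rcases Decidable.not_and_iff_or_not.mp hcase with h | h
            · exact ⟨hsubAC, fun habs => h (le_antisymm
                (Set.ncard_le_ncard habs (Set.toFinite _)) hap)⟩
            · have hcmem : c ∈ X := hl_pos_c (Nat.pos_of_ne_zero h)
              exact ⟨hsubAC, fun habs => hcA (habs ⟨hcmem, hcC⟩).2⟩
          have hstrict : delta L (X ∩ A) < delta L (X ∩ C) :=
            hssC.2 _ hproper subset_rfl (Set.toFinite _)
          have : (1 : ℤ) ≤ delta L (X ∩ C) - delta L (X ∩ A) := by omega
          exact_mod_cast this
      have hwl : ((p : ℝ) - a) + l ≤ 2 * ((q : ℝ) + 1) := by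
        have h1 : l + a ≤ q := by omega
        have h2 : p ≤ q := hpq
        have h1' : (l : ℝ) + a ≤ q := by exact_mod_cast h1
        have h2' : (p : ℝ) ≤ q := by exact_mod_cast h2
        have h3 : (0 : ℝ) ≤ a := Nat.cast_nonneg a
        linarith
      have hcore := real_core (w := (p : ℝ) - a) (k := (k : ℝ)) (l := (l : ℝ))
        (e := (((delta L (X ∩ C) - delta L (X ∩ A)) : ℤ) : ℝ)) (m := (q : ℝ))
        (Nat.cast_nonneg l) (by exact_mod_cast hlk2X)
        (by exact_mod_cast sub_nonneg.mpr heC0) hq0 hwl hone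
      have hnq2 : (X.ncard : ℝ) - q = ((p : ℝ) - a) + k := by
        have hz : (X.ncard : ℤ) - (q : ℤ) = (p : ℤ) - (a : ℤ) + (k : ℤ) := by omega
        exact_mod_cast hz
      have hdXr : (delta L X : ℝ) = (delta L (X ∩ C) : ℝ) + (delta L (X ∩ T) : ℝ)
          + (k : ℝ) - (delta L (X ∩ A) : ℝ) - (l : ℝ) := by
        have hz : delta L X = delta L (X ∩ C) + delta L (X ∩ T) + (k : ℤ)
            - delta L (X ∩ A) - (l : ℤ) := by omega
        exact_mod_cast hz
      rw [hnq2] at hmvt hprod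
      push_cast at hcore
      calc f (X.ncard : ℝ) ≤ f (q : ℝ) + g q * (((p : ℝ) - a) + k) := hmvt
        _ ≤ f (q : ℝ) + (((p : ℝ) - a) + k) / (2 * ((q : ℝ) + 1)) := by linarith
        _ ≤ (delta L (X ∩ T) : ℝ) + ((delta L (X ∩ C) : ℝ) - (delta L (X ∩ A) : ℝ))
            + ((k : ℝ) - l) := by linarith
        _ = (delta L X : ℝ) := by linarith
    · -- T-side is the smaller one; expand around p
      have hp0 : (0 : ℝ) ≤ (p : ℝ) := Nat.cast_nonneg p
      have hnp : (p : ℝ) ≤ (X.ncard : ℝ) := by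
        have h : p ≤ X.ncard := by omega
        exact_mod_cast h
      have hmvt := mvt_good hf hp0 hnp
      have hgp := hg (p : ℝ) hp0
      have hprod : g p * ((X.ncard : ℝ) - p) ≤ ((X.ncard : ℝ) - p) / (2 * ((p : ℝ) + 1)) := by
        calc g p * ((X.ncard : ℝ) - p)
            ≤ (1 / (2 * ((p : ℝ) + 1))) * ((X.ncard : ℝ) - p) :=
              mul_le_mul_of_nonneg_right hgp (by linarith)
          _ = ((X.ncard : ℝ) - p) / (2 * ((p : ℝ) + 1)) := by ring
      have hone : ((q : ℝ) - a) + l = 0 ∨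
          1 ≤ (((delta L (X ∩ T) - delta L (X ∩ A)) : ℤ) : ℝ) := by
        by_cases hcase : q = a ∧ l = 0
        · left
          rw [hcase.1]
          have : (l : ℝ) = 0 := by exact_mod_cast hcase.2
          rw [this]; ring
        · right
          have hres : (1 : ℤ) ≤ delta L (X ∩ T) - delta L (X ∩ A) := by
            rcases Decidable.not_and_iff_or_not.mp hcase with h | h
            · have hproper : X ∩ A ⊂ X ∩ T :=
                ⟨hsubAT, fun habs => h (le_antisymm
                  (Set.ncard_le_ncard habs (Set.toFinite _)) haq)⟩
              have hstrict : delta L (X ∩ A) < delta L (X ∩ T) :=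
                hssT.2 _ hproper subset_rfl (Set.toFinite _)
              omega
            · have hl1 : 1 ≤ l := Nat.pos_of_ne_zero h
              omega
          exact_mod_cast hres
      have hwl : ((q : ℝ) - a) + l ≤ 2 * ((p : ℝ) + 1) := by
        have h1 : l + a ≤ q := by omega
        have h2 : q ≤ p := hpq
        have h1' : (l : ℝ) + a ≤ q := by exact_mod_cast h1
        have h2' : (q : ℝ) ≤ p := by exact_mod_cast h2
        have h3 : (0 : ℝ) ≤ a := Nat.cast_nonneg a
        linarith
      have hcore := real_core (w := (q : ℝ) - a) (k := (k : ℝ)) (l := (l : ℝ))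
        (e := (((delta L (X ∩ T) - delta L (X ∩ A)) : ℤ) : ℝ)) (m := (p : ℝ))
        (Nat.cast_nonneg l) (by exact_mod_cast hlk2X)
        (by exact_mod_cast sub_nonneg.mpr heT0) hp0 hwl hone
      have hnp2 : (X.ncard : ℝ) - p = ((q : ℝ) - a) + k := by
        have hz : (X.ncard : ℤ) - (p : ℤ) = (q : ℤ) - (a : ℤ) + (k : ℤ) := by omega
        exact_mod_cast hz
      have hdXr : (delta L X : ℝ) = (delta L (X ∩ C) : ℝ) + (delta L (X ∩ T) : ℝ)
          + (k : ℝ) - (delta L (X ∩ A) : ℝ) - (l : ℝ) := by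
        have hz : delta L X = delta L (X ∩ C) + delta L (X ∩ T) + (k : ℤ)
            - delta L (X ∩ A) - (l : ℤ) := by omega
        exact_mod_cast hz
      rw [hnp2] at hmvt hprod
      push_cast at hcore
      calc f (X.ncard : ℝ) ≤ f (p : ℝ) + g p * (((q : ℝ) - a) + k) := hmvt
        _ ≤ f (p : ℝ) + (((q : ℝ) - a) + k) / (2 * ((p : ℝ) + 1)) := by linarith
        _ ≤ (delta L (X ∩ C) : ℝ) + ((delta L (X ∩ T) : ℝ) - (delta L (X ∩ A) : ℝ))
            + ((k : ℝ) - l) := by linarith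
        _ = (delta L X : ℝ) := by linarith
  exact ⟨part1, part2, part3, part4⟩


end MeasureAmalgamation
end

section
/- Let L consist of a ternary relation R, a 10-ary relation S and an 11-ary relation U, let f(x) = log₈(x+1), and let r = 8⁹ − 11. Let A be the L-structure with domain {a₁,…,a₁₀, u₁,…,u_r} whose relations are exactly S(a₁,…,a₁₀) and U(a₁,…,a₁₀,u_i) for 1 ≤ i ≤ r. Then: δ(A) = 9; δ(X) ≥ f(|X|) for every X ⊆ A, so A ∈ K_f; for every 9-element subset I of {1,…,10}, cl_A({a_i : i ∈ I}) = A and d^A({a_i : i ∈ I}) = 9 (so the a_i, i ∈ I, are d-independent in A); and for every 8-element subset I of {1,…,10}, {a_i : i ∈ I} ≤ A. -/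
open FirstOrder Set

namespace MeasureAmalgamation

variable (L : FirstOrder.Language)

/-- The relations of the example language: a ternary `R`, a 10-ary `S` and an 11-ary
`U`. -/
inductive ExRels : ℕ → Type where
  | R : ExRels 3
  | S : ExRels 10
  | U : ExRels 11

/-- The example language, with relations `R` (ternary), `S` (10-ary), `U` (11-ary). -/
def ExLang : FirstOrder.Language := ⟨fun _ => Empty, ExRels⟩

instance : ExLang.IsRelational := fun _ => inferInstanceAs (IsEmpty Empty)

instance : Finite (Σ n, ExLang.Relations n) := by
  have hsurj : Function.Surjective (fun i : Fin 3 =>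
      (match i with
        | 0 => ⟨3, ExRels.R⟩
        | 1 => ⟨10, ExRels.S⟩
        | 2 => ⟨11, ExRels.U⟩ : Σ n, ExLang.Relations n)) := by
    rintro ⟨n, r⟩
    cases r with
    | R => exact ⟨0, rfl⟩
    | S => exact ⟨1, rfl⟩
    | U => exact ⟨2, rfl⟩
  exact Finite.of_surjective _ hsurj

/-- `r = 8⁹ − 11`. -/
def rBig : ℕ := 8 ^ 9 - 11

/-- The domain of the structure `A`: points `a₁,…,a₁₀` and `u₁,…,u_r`. -/
abbrev ADom : Type := Fin 10 ⊕ Fin rBig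

/-- The structure `A`: its relations are exactly `S(a₁,…,a₁₀)` and `U(a₁,…,a₁₀,uⱼ)` for
`1 ≤ j ≤ r`. -/
instance : ExLang.Structure ADom where
  funMap := fun f => isEmptyElim f
  RelMap := fun {_} rel x =>
    match rel with
    | ExRels.R => False
    | ExRels.S => x = fun i : Fin 10 => Sum.inl i
    | ExRels.U => ∃ j : Fin rBig,
        x = Fin.snoc (fun i : Fin 10 => (Sum.inl i : ADom)) (Sum.inr j)

/-- The good function `f(x) = log₈(x+1)`. -/
noncomputable def fEx : ℝ → ℝ := fun x => Real.logb 8 (x + 1)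

/-! Every relation instance of `A` involves all of `a₁,…,a₁₀`. Hence a subset `X` missing
some `aᵢ` carries no relations and `δ(X) = |X|`, while a subset containing every `aᵢ`
carries `S` and one `U`-instance per `uⱼ ∈ X`, so `δ(X) = |X| - 1 - (|X| - 10) = 9`.
Since `|A| = 8⁹ - 1`, this gives `f(|X|) ≤ δ(X)` in both cases. Every superset of nine of
the `aᵢ` has predimension at least `9 = δ(A)`, so none but `A` is self-sufficient, while
eight of the `aᵢ` have predimension `8`, below that of any proper extension. -/

section General

variable (L : FirstOrder.Language) {N : Type*} [L.Structure N]

def relInstances (A : Set N) : Set (Σ n, L.Relations n × (Fin n → N)) :=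
  {p | (∀ i, p.2.2 i ∈ A) ∧ Language.Structure.RelMap p.2.1 p.2.2}

theorem delta_eq_ncard_sub_ncard_relInstances (A : Set N) :
    delta L A = A.ncard - (relInstances L A).ncard :=
  rfl

theorem selfSuffIn_self (B : Set N) : SelfSuffIn L B B :=
  ⟨subset_rfl, fun _ hB' hB'B _ => absurd hB'B hB'.not_subset⟩

variable {L}

theorem clIn_eq_of_delta_le {X B : Set N} (hB : B.Finite) (hXB : X ⊆ B)
    (h : ∀ A, X ⊆ A → A ⊆ B → delta L B ≤ delta L A) : clIn L X B = B := by
  refine (sInter_subset_of_mem (show B ∈ {A | X ⊆ A ∧ SelfSuffIn L A B} from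
    ⟨hXB, selfSuffIn_self L B⟩)).antisymm (subset_sInter fun A hA => ?_)
  obtain ⟨hXA, hAB, hmin⟩ := hA
  by_contra hBA
  exact (hmin B (hAB.ssubset_of_not_subset hBA) subset_rfl hB).not_ge (h A hXA hAB)

end General

theorem ncard_eq_ncard_preimage_inl_add_ncard_preimage_inr {α β : Type*} {X : Set (α ⊕ β)}
    (hX : X.Finite) : X.ncard = (Sum.inl ⁻¹' X).ncard + (Sum.inr ⁻¹' X).ncard := by
  conv_lhs => rw [← image_preimage_inl_union_image_preimage_inr X]
  rw [ncard_union_eq disjoint_image_inl_image_inr (hX.preimage Sum.inl_injective.injOn |>.image _)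
      (hX.preimage Sum.inr_injective.injOn |>.image _),
    ncard_image_of_injective _ Sum.inl_injective, ncard_image_of_injective _ Sum.inr_injective]

def sFact : Σ n, ExLang.Relations n × (Fin n → ADom) :=
  ⟨10, ExRels.S, fun i : Fin 10 => (Sum.inl i : ADom)⟩

def uFact (j : Fin rBig) : Σ n, ExLang.Relations n × (Fin n → ADom) :=
  ⟨11, ExRels.U, Fin.snoc (fun i : Fin 10 => (Sum.inl i : ADom)) (Sum.inr j)⟩

theorem uFact_injective : Function.Injective uFact := fun j k h => by
  have h' := congrArg Prod.snd (eq_of_heq (Sigma.mk.inj_iff.mp h).2)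
  simpa using h'

theorem sFact_notMem_range_uFact : sFact ∉ range uFact := by
  rintro ⟨j, h⟩
  cases (Sigma.mk.inj_iff.mp h).1

theorem relMap_iff_eq_sFact_or_mem_range_uFact (p : Σ n, ExLang.Relations n × (Fin n → ADom)) :
    Language.Structure.RelMap p.2.1 p.2.2 ↔ p = sFact ∨ p ∈ range uFact := by
  refine ⟨fun h => ?_, ?_⟩
  · obtain ⟨n, r, x⟩ := p
    cases r with
    | R => exact h.elim
    | S => subst h; exact .inl rfl
    | U => obtain ⟨j, rfl⟩ := h; exact .inr ⟨j, rfl⟩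
  · rintro (rfl | ⟨j, rfl⟩)
    exacts [rfl, ⟨j, rfl⟩]

theorem mem_relInstances_iff {X : Set ADom} {p : Σ n, ExLang.Relations n × (Fin n → ADom)} :
    p ∈ relInstances ExLang X ↔
      range Sum.inl ⊆ X ∧ (p = sFact ∨ ∃ j, Sum.inr j ∈ X ∧ uFact j = p) := by
  rw [relInstances, mem_ofPred_eq, relMap_iff_eq_sFact_or_mem_range_uFact, ← range_subset_iff]
  constructor
  · rintro ⟨hp, rfl | ⟨j, rfl⟩⟩
    · exact ⟨hp, .inl rfl⟩
    · rw [uFact, Fin.range_snoc, insert_subset_iff] at hp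
      exact ⟨hp.2, .inr ⟨j, hp.1, rfl⟩⟩
  · rintro ⟨ha, rfl | ⟨j, hj, rfl⟩⟩
    · exact ⟨ha, .inl rfl⟩
    · refine ⟨?_, .inr ⟨j, rfl⟩⟩
      rw [uFact, Fin.range_snoc, insert_subset_iff]
      exact ⟨hj, ha⟩

theorem relInstances_of_range_subset {X : Set ADom} (h : range Sum.inl ⊆ X) :
    relInstances ExLang X = insert sFact (uFact '' (Sum.inr ⁻¹' X)) := by
  ext p
  simp only [mem_relInstances_iff, h, true_and, mem_insert_iff, mem_image, mem_preimage]

theorem relInstances_of_not_range_subset {X : Set ADom} (h : ¬ range Sum.inl ⊆ X) :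
    relInstances ExLang X = ∅ :=
  eq_empty_of_forall_notMem fun _ hp => h (mem_relInstances_iff.mp hp).1

theorem delta_of_range_subset {X : Set ADom} (h : range Sum.inl ⊆ X) :
    delta ExLang X = 9 := by
  have hS : sFact ∉ uFact '' (Sum.inr ⁻¹' X) := fun hS =>
    sFact_notMem_range_uFact (image_subset_range _ _ hS)
  rw [delta_eq_ncard_sub_ncard_relInstances, relInstances_of_range_subset h,
    ncard_insert_of_notMem hS, ncard_image_of_injective _ uFact_injective,
    ncard_eq_ncard_preimage_inl_add_ncard_preimage_inr (toFinite X),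
    preimage_eq_univ_iff.mpr h, ncard_univ, Nat.card_fin]
  push_cast
  ring

theorem delta_of_not_range_subset {X : Set ADom} (h : ¬ range Sum.inl ⊆ X) :
    delta ExLang X = X.ncard := by
  rw [delta_eq_ncard_sub_ncard_relInstances, relInstances_of_not_range_subset h, ncard_empty,
    Nat.cast_zero, sub_zero]

theorem delta_univ_eq_nine : delta ExLang (univ : Set ADom) = 9 :=
  delta_of_range_subset (subset_univ _)

theorem delta_of_ncard_lt_ten {X : Set ADom} (hX : X.ncard < 10) : delta ExLang X = X.ncard := by
  refine delta_of_not_range_subset fun h => hX.not_ge ?_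
  have := ncard_le_ncard h (toFinite X)
  rwa [ncard_range_of_injective Sum.inl_injective, Nat.card_fin] at this

theorem min_ncard_nine_le_delta (X : Set ADom) : min (X.ncard : ℤ) 9 ≤ delta ExLang X := by
  by_cases h : range Sum.inl ⊆ X
  · rw [delta_of_range_subset h]
    exact min_le_right _ _
  · rw [delta_of_not_range_subset h]
    exact min_le_left _ _

theorem clIn_univ_eq_univ_of_nine_le_ncard {X : Set ADom} (hX : 9 ≤ X.ncard) :
    clIn ExLang X univ = univ :=
  clIn_eq_of_delta_le finite_univ (subset_univ X) fun A hXA _ => by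
    have := ncard_le_ncard hXA (toFinite A)
    have := min_ncard_nine_le_delta A
    rw [delta_univ_eq_nine]
    omega

theorem selfSuffIn_univ_of_ncard_le_eight {X : Set ADom} (hX : X.ncard ≤ 8) :
    SelfSuffIn ExLang X univ := by
  refine ⟨subset_univ X, fun B hXB _ hB => ?_⟩
  have := ncard_lt_ncard hXB hB
  have := min_ncard_nine_le_delta B
  rw [delta_of_ncard_lt_ten (by omega)]
  omega

theorem fEx_natCast_le_iff (n m : ℕ) : fEx n ≤ m ↔ n + 1 ≤ 8 ^ m := by
  rw [fEx, Real.logb_le_iff_le_rpow (by norm_num) (by positivity), Real.rpow_natCast]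
  exact_mod_cast Iff.rfl

theorem fEx_natCast_le_self (n : ℕ) : fEx n ≤ n :=
  (fEx_natCast_le_iff n n).mpr <|
    calc n + 1 ≤ 2 ^ n := Nat.lt_two_pow_self
      _ ≤ 8 ^ n := Nat.pow_le_pow_left (by norm_num) n

theorem ncard_add_one_le_eight_pow_nine (X : Set ADom) : X.ncard + 1 ≤ 8 ^ 9 := by
  have := ncard_le_card X
  rw [Nat.card_sum, Nat.card_fin, Nat.card_fin, rBig] at this
  omega

theorem fEx_ncard_le_delta (X : Set ADom) : fEx X.ncard ≤ delta ExLang X := by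
  by_cases h : range Sum.inl ⊆ X
  · rw [delta_of_range_subset h]
    exact_mod_cast (fEx_natCast_le_iff _ 9).mpr (ncard_add_one_le_eight_pow_nine X)
  · rw [delta_of_not_range_subset h]
    exact fEx_natCast_le_self _

/-- **Properties of the structure `A` in Theorem 4.7**: `δ(A) = 9`; `δ(X) ≥ f(|X|)` for
all `X ⊆ A`, so `A ∈ K_f`; each 9-subset of `{a₁,…,a₁₀}` is `d`-independent with closure
all of `A`; and each 8-subset of `{a₁,…,a₁₀}` is self-sufficient in `A`. -/
theorem exampleStructure_properties :
    delta ExLang (Set.univ : Set ADom) = 9 ∧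
    (∀ X : Set ADom, fEx X.ncard ≤ (delta ExLang X : ℝ)) ∧
    InKf ExLang fEx ADom ∧
    (∀ I : Finset (Fin 10), I.card = 9 →
      clIn ExLang ((fun i : Fin 10 => (Sum.inl i : ADom)) '' ↑I)
          (Set.univ : Set ADom) = Set.univ ∧
      dIn ExLang ((fun i : Fin 10 => (Sum.inl i : ADom)) '' ↑I)
          (Set.univ : Set ADom) = 9) ∧
    (∀ I : Finset (Fin 10), I.card = 8 →
      SelfSuffIn ExLang ((fun i : Fin 10 => (Sum.inl i : ADom)) '' ↑I)
        (Set.univ : Set ADom)) := by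
  have hcard (I : Finset (Fin 10)) :
      ((fun i : Fin 10 => (Sum.inl i : ADom)) '' ↑I).ncard = I.card := by
    rw [ncard_image_of_injective _ Sum.inl_injective, ncard_coe_finset]
  have hcl (I : Finset (Fin 10)) (hI : I.card = 9) :
      clIn ExLang ((fun i : Fin 10 => (Sum.inl i : ADom)) '' ↑I) univ = univ :=
    clIn_univ_eq_univ_of_nine_le_ncard (hcard I ▸ hI.ge)
  refine ⟨delta_univ_eq_nine, fEx_ncard_le_delta, fun X _ => fEx_ncard_le_delta X,
    fun I hI => ⟨hcl I hI, ?_⟩,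
    fun I hI => selfSuffIn_univ_of_ncard_le_eight (hcard I ▸ hI.le)⟩
  rw [dIn, hcl I hI, delta_univ_eq_nine]

end MeasureAmalgamation
end

section
/- Let L consist of a ternary relation R, a 10-ary relation S and an 11-ary relation U, let f(x) = log₈(x+1), r = 8⁹ − 11, and let A be the L-structure with domain {a₁,…,a₁₀, u₁,…,u_r} whose relations are exactly S(a₁,…,a₁₀) and U(a₁,…,a₁₀,u_i) for 1 ≤ i ≤ r. Suppose B is a finite L-structure containing distinct elements b₁,…,b₁₀ with δ(B) ≤ 10, such that for each 9-element subset I of {1,…,10} there is a subset C_I ⊆ B isomorphic to A via an isomorphism sending b_i to a_i for i ∈ I, and such that C_I ∩ C_{I′} = {b_i : i ∈ I ∩ I′} for distinct 9-element subsets I, I′. Then |B| ≥ 10·8⁹ − 90, hence f(|B|) > 10 ≥ δ(B), and therefore B ∉ K_f. -/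
open FirstOrder Set

namespace MeasureAmalgamation

variable (L : FirstOrder.Language)

set_option maxRecDepth 8000 in
set_option maxHeartbeats 1000000 in
/-- **Counting argument in Theorem 4.7**: if `B` is a finite `L`-structure with distinct
points `b₁,…,b₁₀`, `δ(B) ≤ 10`, containing for each 9-subset `I` of `{1,…,10}` a copy
`C_I` of `A` via an isomorphism sending `bᵢ ↦ aᵢ` (`i ∈ I`), with
`C_I ∩ C_{I′} = {bᵢ : i ∈ I ∩ I′}`, then `|B| ≥ 10·8⁹ − 90`, hence
`f(|B|) > 10 ≥ δ(B)` and `B ∉ K_f`. -/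
theorem counting_contradiction
    (B : Type) [Fintype B] [ExLang.Structure B]
    (b : Fin 10 → B) (hb : Function.Injective b)
    (hδ : delta ExLang (Set.univ : Set B) ≤ 10)
    (e : ∀ I : Finset (Fin 10), I.card = 9 → (ADom ↪[ExLang] B))
    (he : ∀ (I : Finset (Fin 10)) (hI : I.card = 9),
      ∀ i ∈ I, e I hI (Sum.inl i) = b i)
    (hint : ∀ (I I' : Finset (Fin 10)) (hI : I.card = 9) (hI' : I'.card = 9),
      I ≠ I' →
      Set.range ⇑(e I hI) ∩ Set.range ⇑(e I' hI') = b '' (↑(I ∩ I') : Set (Fin 10))) :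
    10 * 8 ^ 9 - 90 ≤ Fintype.card B ∧
    10 < fEx (Fintype.card B) ∧
    ¬ InKf ExLang fEx B := by
  classical
  -- `b i ∉ range (e I)` when `i ∉ I`
  have hout : ∀ (I : Finset (Fin 10)) (hI : I.card = 9) (i : Fin 10), i ∉ I →
      b i ∉ Set.range ⇑(e I hI) := by
    intro I hI i hiI hmem
    obtain ⟨j, hji⟩ : ∃ j : Fin 10, j ≠ i := exists_ne i
    set I' : Finset (Fin 10) := Finset.univ.erase j with hI'def
    have hI' : I'.card = 9 := by simp [hI'def]
    have hiI' : i ∈ I' := Finset.mem_erase.2 ⟨fun h => hji (h.symm) , Finset.mem_univ i⟩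
    have hne : I ≠ I' := fun h => hiI (h ▸ hiI')
    have hmem' : b i ∈ Set.range ⇑(e I' hI') := ⟨Sum.inl i, he I' hI' i hiI'⟩
    have : b i ∈ b '' (↑(I ∩ I') : Set (Fin 10)) := by
      rw [← hint I I' hI hI' hne]; exact ⟨hmem, hmem'⟩
    obtain ⟨k, hk, hbk⟩ := this
    rw [hb hbk] at hk
    exact hiI (Finset.mem_inter.1 (Finset.mem_coe.1 hk)).1
  -- the disjoint pieces
  set bu : Finset B := Finset.univ.image b with hbu
  have hbucard : bu.card = 10 := by
    rw [hbu, Finset.card_image_of_injective _ hb]; simp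
  set F : Finset (Fin 10) → Finset B := fun I =>
    if h : I.card = 9 then (Set.range ⇑(e I h)).toFinset \ bu else ∅ with hF
  set S : Finset (Finset (Fin 10)) := Finset.univ.powersetCard 9 with hS
  have hScard : S.card = 10 := by
    rw [hS, Finset.card_powersetCard]; simp
  have hSmem : ∀ I ∈ S, I.card = 9 := by
    intro I hI; exact (Finset.mem_powersetCard.1 hI).2
  -- each piece has card rBig + 1
  have hFcard : ∀ I ∈ S, (F I).card = rBig + 1 := by
    intro I hIS
    have hI : I.card = 9 := hSmem I hIS
    have hFI : F I = (Set.range ⇑(e I hI)).toFinset \ bu := by simp [hF, hI]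
    have hrange : (Set.range ⇑(e I hI)).toFinset.card = 10 + rBig := by
      rw [Set.toFinset_card, Set.card_range_of_injective (e I hI).injective,
        Fintype.card_sum, Fintype.card_fin, Fintype.card_fin]
    have hinter : (Set.range ⇑(e I hI)).toFinset ∩ bu = I.image b := by
      ext x
      simp only [Finset.mem_inter, Set.mem_toFinset, hbu, Finset.mem_image,
        Finset.mem_univ, true_and, Finset.mem_image]
      constructor
      · rintro ⟨hx, i, rfl⟩
        by_cases hiI : i ∈ I
        · exact ⟨i, hiI, rfl⟩
        · exact absurd hx (hout I hI i hiI)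
      · rintro ⟨i, hiI, rfl⟩
        exact ⟨⟨Sum.inl i, he I hI i hiI⟩, i, rfl⟩
    have hintercard : ((Set.range ⇑(e I hI)).toFinset ∩ bu).card = 9 := by
      rw [hinter, Finset.card_image_of_injective _ hb, hI]
    have := Finset.card_sdiff_add_card_inter (Set.range ⇑(e I hI)).toFinset bu
    rw [hintercard, hrange] at this
    rw [hFI]
    omega
  -- pairwise disjointness of the pieces
  have hdisj : ∀ I ∈ S, ∀ I' ∈ S, I ≠ I' → Disjoint (F I) (F I') := by
    intro I hIS I' hI'S hne
    have hI : I.card = 9 := hSmem I hIS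
    have hI' : I'.card = 9 := hSmem I' hI'S
    rw [Finset.disjoint_left]
    intro x hx hx'
    simp only [hF, hI, hI', dif_pos, Finset.mem_sdiff, Set.mem_toFinset] at hx hx'
    have : x ∈ b '' (↑(I ∩ I') : Set (Fin 10)) := by
      rw [← hint I I' hI hI' hne]; exact ⟨hx.1, hx'.1⟩
    obtain ⟨k, _, rfl⟩ := this
    exact hx.2 (by simp [hbu])
  have hbiU : (S.biUnion F).card = 10 * (rBig + 1) := by
    rw [Finset.card_biUnion hdisj, Finset.sum_congr rfl hFcard, Finset.sum_const,
      hScard, smul_eq_mul]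
  have hdisj2 : Disjoint (S.biUnion F) bu := by
    rw [Finset.disjoint_left]
    intro x hx hx'
    obtain ⟨I, hIS, hxI⟩ := Finset.mem_biUnion.1 hx
    have hI : I.card = 9 := hSmem I hIS
    simp only [hF, hI, dif_pos, Finset.mem_sdiff] at hxI
    exact hxI.2 hx'
  have hcard : 10 * (rBig + 1) + 10 ≤ Fintype.card B := by
    calc 10 * (rBig + 1) + 10 = (S.biUnion F ∪ bu).card := by
          rw [Finset.card_union_of_disjoint hdisj2, hbiU, hbucard]
      _ ≤ Fintype.card B := Finset.card_le_univ _
  have h1 : 10 * 8 ^ 9 - 90 ≤ Fintype.card B := by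
    have : 10 * (rBig + 1) + 10 = 10 * 8 ^ 9 - 90 := by norm_num [rBig]
    omega
  clear_value bu F S
  clear hout hbucard hbu hF hS hScard hSmem hFcard hdisj hbiU hdisj2 hcard
  clear S F bu e he hint
  have hlt : (10 : ℝ) < fEx (Fintype.card B) := by
    have hgt : (8 : ℝ) ^ (10 : ℕ) < (Fintype.card B : ℝ) + 1 := by
      have h2 : (1073741824 : ℕ) < Fintype.card B + 1 := by
        have : (10 * 8 ^ 9 - 90 : ℕ) = 1342177190 := by norm_num
        omega
      calc (8 : ℝ) ^ (10 : ℕ) = ((1073741824 : ℕ) : ℝ) := by norm_num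
        _ < ((Fintype.card B + 1 : ℕ) : ℝ) := by exact_mod_cast h2
        _ = (Fintype.card B : ℝ) + 1 := by push_cast; ring
    have h0 : (0 : ℝ) < (Fintype.card B : ℝ) + 1 := by positivity
    unfold fEx
    rw [Real.lt_logb_iff_rpow_lt (by norm_num) h0]
    rw [show ((10 : ℝ) = ((10 : ℕ) : ℝ)) by norm_num, Real.rpow_natCast]
    exact hgt
  refine ⟨h1, hlt, ?_⟩
  intro hK
  have hKu := hK Set.univ (Set.finite_univ)
  rw [Set.ncard_univ, Nat.card_eq_fintype_card] at hKu
  have h10 : (delta ExLang (Set.univ : Set B) : ℝ) ≤ 10 := by exact_mod_cast hδ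
  linarith

end MeasureAmalgamation
end

section
/- Let L consist of a ternary relation R, a 10-ary relation S and an 11-ary relation U, let f(x) = log₈(x+1) (a good function with f′(x) ≤ 1/(2(x+1))), and let M_f be the generic structure of (K_f, ≤). Let r = 8⁹ − 11 and let A be the L-structure with domain {a₁,…,a₁₀, u₁,…,u_r} whose relations are exactly S(a₁,…,a₁₀) and U(a₁,…,a₁₀,u_i) for 1 ≤ i ≤ r. Let E = {(α(a₁),…,α(a₁₀)) : α an embedding of A into M_f with α(A) ≤ M_f} ⊆ M_f^{10}. Then there is no 10-tuple (b₁,…,b₁₀) of distinct elements of M_f with d^{M_f}({b₁,…,b₁₀}) = 10 such that for every 9-element subset I of {1,…,10}, the tuple (b_i)_{i∈I} lies in the image of E under the projection π_I : M_f^{10} → M_f^I. (In particular, M_f does not satisfy the independent amalgamation property of Corollary 3.2 with dimension d, and M_f is not MS-measurable.) -/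
/-!
For each `i`, the hypothesis gives a `≤`-copy `eᵢ` of `A` whose `ā`-part agrees with `b̄` off
the coordinate `i`. If some copy contains all of `b̄`, then `cl(b̄)` lies in that copy, which
has `δ = (10 + r) - (r + 1) = 9`, contradicting `d(b̄) = 10`. Otherwise the ten `ā`-parts are
pairwise distinct, so the union `D` of `b̄` and the copies carries `10 (r + 1)` distinct relation
instances on at most `10 + 10 (r + 1)` points. Then `δ(D) ≤ min(10, |D| - 10 (r + 1))`, which is
below `log₈(|D| + 1)` since `10 (r + 1) > 8¹⁰`; so `D ∉ K_f`, while every finite subset of the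
generic structure lies in `K_f`.
-/

open FirstOrder Set

namespace MeasureAmalgamation

variable (L : FirstOrder.Language)

section SelfSufficiency

variable {L} {N : Type*} [L.Structure N]

lemma SelfSuffIn.delta_le {A B : Set N} (h : SelfSuffIn L A B) (hB : B.Finite) :
    delta L A ≤ delta L B := by
  rcases h.1.eq_or_ssubset with rfl | hlt
  · exact le_rfl
  · exact (h.2 B hlt subset_rfl hB).le

lemma SelfSuffM.delta_lt {A Y : Set N} (hA : SelfSuffM L A) (hY : Y.Finite) (hlt : A ∩ Y ⊂ Y) :
    delta L (A ∩ Y) < delta L Y :=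
  (hA Y hY).2 Y hlt subset_rfl hY

lemma SelfSuffM.delta_le {A Y : Set N} (hA : SelfSuffM L A) (hY : Y.Finite) :
    delta L (A ∩ Y) ≤ delta L Y :=
  (hA Y hY).delta_le hY

/-- Testing `A ∩ X ≤ X` only against `B' = X` suffices, since `A ∩ X = A ∩ B'` for
`A ∩ X ⊆ B' ⊆ X`. -/
lemma SelfSuffM.of_delta_lt {A : Set N}
    (h : ∀ Y : Set N, Y.Finite → A ∩ Y ⊂ Y → delta L (A ∩ Y) < delta L Y) : SelfSuffM L A := by
  refine fun X _ => ⟨inter_subset_right, fun Y hlt hYX hY => ?_⟩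
  have hAY : A ∩ X = A ∩ Y :=
    subset_antisymm (fun z hz => ⟨hz.1, hlt.subset hz⟩) (inter_subset_inter_right A hYX)
  rw [hAY] at hlt ⊢
  exact h Y hY hlt

lemma selfSuffM_univ : SelfSuffM L (univ : Set N) :=
  SelfSuffM.of_delta_lt fun Y _ hlt => absurd (univ_inter Y) hlt.ne

lemma SelfSuffM.inter {A B : Set N} (hA : SelfSuffM L A) (hB : SelfSuffM L B) :
    SelfSuffM L (A ∩ B) := by
  refine SelfSuffM.of_delta_lt fun Y hY hlt => ?_
  rw [inter_assoc] at hlt ⊢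
  rcases (inter_subset_right : A ∩ (B ∩ Y) ⊆ B ∩ Y).eq_or_ssubset with h | h
  · rw [h] at hlt ⊢
    exact hB.delta_lt hY hlt
  · exact (hA.delta_lt (hY.inter_of_right B) h).trans_le (hB.delta_le hY)

lemma SelfSuffM.sInter_of_finite {F : Set (Set N)} (hF : F.Finite)
    (h : ∀ A ∈ F, SelfSuffM L A) : SelfSuffM L (⋂₀ F) := by
  induction F, hF using Set.Finite.induction_on with
  | empty => simpa using selfSuffM_univ
  | @insert A F _ _ ih =>
    rw [sInter_insert]
    exact (h A (mem_insert A F)).inter (ih fun B hB => h B (mem_insert_of_mem A hB))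

/-- Inside a finite `Y` the family `F` leaves only finitely many traces `A ∩ Y`, so `⋂₀ F ∩ Y`
is already cut out by a finite subfamily. -/
lemma SelfSuffM.sInter {F : Set (Set N)} (h : ∀ A ∈ F, SelfSuffM L A) :
    SelfSuffM L (⋂₀ F) := by
  intro Y hY
  obtain ⟨G, hGF, hG⟩ := exists_subset_bijOn F (· ∩ Y)
  have hGfin : G.Finite := by
    refine Finite.of_finite_image ?_ hG.injOn
    rw [hG.image_eq]
    exact hY.finite_subsets.subset (image_subset_iff.2 fun A _ => inter_subset_right)
  have hFG : ⋂₀ F ∩ Y = ⋂₀ G ∩ Y := by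
    refine subset_antisymm (inter_subset_inter_left Y (sInter_subset_sInter hGF)) ?_
    rintro z ⟨hzG, hzY⟩
    refine ⟨fun A hA => ?_, hzY⟩
    obtain ⟨B, hB, hBA⟩ := hG.surjOn (mem_image_of_mem _ hA)
    exact (hBA ▸ ⟨hzG B hB, hzY⟩ : z ∈ A ∩ Y).1
  rw [hFG]
  exact SelfSuffM.sInter_of_finite hGfin (fun A hA => h A (hGF hA)) Y hY

lemma selfSuffM_clM (X : Set N) : SelfSuffM L (clM L X) :=
  SelfSuffM.sInter fun _ hA => hA.2

lemma dM_le_delta_of_subset {X A : Set N} (hXA : X ⊆ A) (hA : A.Finite)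
    (hAM : SelfSuffM L A) : dM L X ≤ delta L A := by
  have hcl : clM L X ⊆ A := sInter_subset_of_mem ⟨hXA, hAM⟩
  have := (selfSuffM_clM X).delta_le (L := L) hA
  rwa [inter_eq_left.2 hcl] at this

end SelfSufficiency

section RelationInstances

variable {L} {N : Type*} [L.Structure N]

/-- `delta L A` is `A.ncard - (relSet A).ncard`. -/
def relSet (A : Set N) : Set (Σ n, L.Relations n × (Fin n → N)) :=
  {p | (∀ i, p.2.2 i ∈ A) ∧ Language.Structure.RelMap p.2.1 p.2.2}

lemma relSet_mono {A B : Set N} (h : A ⊆ B) : relSet (L := L) A ⊆ relSet B :=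
  fun _ hp => ⟨fun i => h (hp.1 i), hp.2⟩

lemma relSet_finite [Finite (Σ n, L.Relations n)] {A : Set N} (hA : A.Finite) :
    (relSet (L := L) A).Finite := by
  have := hA.to_subtype
  refine (finite_range fun q : Σ q : Σ n, L.Relations n, (Fin q.1 → A) =>
    (⟨q.1.1, q.1.2, fun i => (q.2 i : N)⟩ : Σ n, L.Relations n × (Fin n → N))).subset ?_
  rintro ⟨n, R, t⟩ ⟨ht, -⟩
  exact ⟨⟨⟨n, R⟩, fun i => ⟨t i, ht i⟩⟩, rfl⟩

lemma delta_le_of_injective [Finite (Σ n, L.Relations n)] {ι : Type*} [Finite ι] {A : Set N}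
    (hA : A.Finite) {ψ : ι → Σ n, L.Relations n × (Fin n → N)} (hψ : Function.Injective ψ)
    (hmem : ∀ p, ψ p ∈ relSet A) : delta L A ≤ A.ncard - Nat.card ι := by
  have : Nat.card ι ≤ (relSet (L := L) A).ncard := by
    rw [← ncard_range_of_injective hψ]
    exact ncard_le_ncard (range_subset_iff.2 hmem) (relSet_finite hA)
  change (A.ncard : ℤ) - (relSet (L := L) A).ncard ≤ _
  omega

lemma IsGeneric.le_delta [L.IsRelational] {f : ℝ → ℝ} (hgen : IsGeneric L (N := N) f)
    {X : Set N} (hX : X.Finite) : f X.ncard ≤ delta L X := by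
  obtain ⟨⟨c, hmono, -, -, hK, hcover⟩, -⟩ := hgen
  obtain ⟨k, hk⟩ := hmono.directed_le.exists_mem_subset_of_finset_subset_biUnion
    (s := hX.toFinset) (by simp [hcover])
  exact hK k X (by simpa using hk)

end RelationInstances

section Example

variable {N : Type*} [ExLang.Structure N]

/-- The point `(e a₁, …, e a₁₀)` of `E` given by the copy `e` of `A`. -/
def aPart (e : ADom ↪[ExLang] N) : Fin 10 → N := fun k => e (Sum.inl k)

/-- The `r + 1` relation instances of the copy `e(A)`: `S(ā)` for `none` and `U(ā, uⱼ)` for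
`some j`. -/
def relInst (e : ADom ↪[ExLang] N) : Option (Fin rBig) → Σ n, ExLang.Relations n × (Fin n → N)
  | none => ⟨10, ExRels.S, aPart e⟩
  | some j => ⟨11, ExRels.U, Fin.snoc (aPart e) (e (Sum.inr j))⟩

lemma relInst_mem_relSet (e : ADom ↪[ExLang] N) (o : Option (Fin rBig)) :
    relInst e o ∈ relSet (range e) := by
  cases o with
  | none =>
    exact ⟨fun _ => mem_range_self _, (e.map_rel ExRels.S (fun k => Sum.inl k)).2 rfl⟩
  | some j =>
    refine ⟨fun k => ?_, ?_⟩
    · refine Fin.lastCases ?_ (fun k => ?_) k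
      · simp only [relInst, Fin.snoc_last, mem_range_self]
      · simp only [relInst, Fin.snoc_castSucc, aPart, mem_range_self]
    · have h := (e.map_rel ExRels.U (Fin.snoc (fun k => Sum.inl k) (Sum.inr j))).2 ⟨j, rfl⟩
      rwa [Fin.comp_snoc] at h

lemma relInst_eq_relInst {e e' : ADom ↪[ExLang] N} {o o' : Option (Fin rBig)}
    (h : relInst e o = relInst e' o') :
    aPart e = aPart e' ∧ o.map (e ∘ Sum.inr) = o'.map (e' ∘ Sum.inr) := by
  cases o <;> cases o' <;> simp only [relInst, Sigma.mk.injEq] at h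
  · exact ⟨(Prod.mk.inj (eq_of_heq h.2)).2, rfl⟩
  · exact absurd h.1 (by norm_num)
  · exact absurd h.1 (by norm_num)
  · have h' := (Prod.mk.inj (eq_of_heq h.2)).2
    refine ⟨funext fun k => ?_, ?_⟩
    · simpa using congrFun h' k.castSucc
    · have hlast := congrFun h' (Fin.last 10)
      rw [Fin.snoc_last, Fin.snoc_last] at hlast
      simp [hlast]

lemma relInst_injective (e : ADom ↪[ExLang] N) : Function.Injective (relInst e) :=
  fun _ _ h => Option.map_injective (e.injective.comp Sum.inr_injective) (relInst_eq_relInst h).2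

lemma delta_range_le (e : ADom ↪[ExLang] N) : delta ExLang (range e) ≤ 9 := by
  have h := delta_le_of_injective (finite_range e) (relInst_injective e) (relInst_mem_relSet e)
  rw [ncard_range_of_injective e.injective] at h
  simp only [Nat.card_eq_fintype_card, Fintype.card_sum, Fintype.card_option,
    Fintype.card_fin] at h
  omega

lemma dM_range_aPart_le {e : ADom ↪[ExLang] N} (he : SelfSuffM ExLang (range e)) :
    dM ExLang (range (aPart e)) ≤ 9 :=
  (dM_le_delta_of_subset (range_subset_iff.2 fun k => mem_range_self (Sum.inl k))
    (finite_range e) he).trans (delta_range_le e)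

/-- With `r' = 10 (r + 1)`: for `n ≤ r'` the left side is `≤ 0`, and for `n > r'` it is `≤ 10`,
while `log₈(n + 1) > 10` because `8¹⁰ < r'`. -/
lemma sub_lt_fEx {n : ℕ} (hn : 1 ≤ n) (hn' : n ≤ 10 + 10 * (rBig + 1)) :
    (n : ℝ) - (10 * (rBig + 1) : ℕ) < fEx n := by
  unfold fEx
  rcases le_or_gt n (10 * (rBig + 1)) with h | h
  · have : 0 < Real.logb 8 (n + 1) := Real.logb_pos (by norm_num) (by norm_cast; omega)
    have : (n : ℝ) ≤ (10 * (rBig + 1) : ℕ) := by exact_mod_cast h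
    linarith
  · have h10 : (10 : ℝ) < Real.logb 8 (n + 1) := by
      rw [Real.lt_logb_iff_rpow_lt (by norm_num) (by positivity)]
      have hr : 10 * (rBig + 1) = 1342177180 := rfl
      have : (1342177180 : ℝ) < n := by exact_mod_cast hr ▸ h
      norm_num
      linarith
    have : (n : ℝ) ≤ 10 + (10 * (rBig + 1) : ℕ) := by exact_mod_cast hn'
    linarith

/-- The `ā`-parts are pairwise distinct, so the copies carry `10 (r + 1)` distinct relation
instances on the at most `10 + 10 (r + 1)` points of `b̄` and the copies. -/
lemma exists_delta_lt_fEx_of_copies (b : Fin 10 → N) (e : Fin 10 → ADom ↪[ExLang] N)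
    (hagree : ∀ i k, k ≠ i → aPart (e i) k = b k) (hne : ∀ i, aPart (e i) ≠ b) :
    ∃ D : Set N, D.Finite ∧ (delta ExLang D : ℝ) < fEx D.ncard := by
  have hdist : Function.Injective fun i => aPart (e i) := by
    intro i i' h
    by_contra hii
    refine hne i (funext fun k => ?_)
    rcases eq_or_ne k i with rfl | hki
    · exact (congrFun h k).trans (hagree i' k hii)
    · exact hagree i k hki
  let F : Fin 10 ⊕ Fin 10 × Option (Fin rBig) → N
    | .inl k => b k
    | .inr (i, o) => e i (o.elim (.inl i) .inr)
  have hcopy : ∀ i, range (e i) ⊆ range F := by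
    rintro i _ ⟨k | j, rfl⟩
    · rcases eq_or_ne k i with rfl | hki
      · exact ⟨.inr (k, none), rfl⟩
      · exact ⟨.inl k, (hagree i k hki).symm⟩
    · exact ⟨.inr (i, some j), rfl⟩
  have hψ : Function.Injective fun p : Fin 10 × Option (Fin rBig) => relInst (e p.1) p.2 := by
    rintro ⟨i, o⟩ ⟨i', o'⟩ h
    obtain rfl := hdist (relInst_eq_relInst h).1
    exact Prod.ext rfl (relInst_injective (e i) h)
  have hδ := delta_le_of_injective (finite_range F) hψ
    fun p => relSet_mono (hcopy p.1) (relInst_mem_relSet (e p.1) p.2)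
  have hcard : (range F).ncard ≤ 10 + 10 * (rBig + 1) := by
    rw [← image_univ]
    simpa using ncard_image_le (f := F) finite_univ
  have hpos : 1 ≤ (range F).ncard :=
    (ncard_pos (finite_range F)).2 (range_nonempty F)
  refine ⟨range F, finite_range F, ?_⟩
  have := sub_lt_fEx hpos hcard
  simp only [Nat.card_eq_fintype_card, Fintype.card_prod, Fintype.card_option,
    Fintype.card_fin] at hδ
  push_cast at this ⊢
  have : (delta ExLang (range F) : ℝ) ≤ (range F).ncard - 10 * (rBig + 1) := by
    exact_mod_cast hδ
  linarith

end Example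

theorem no_independent_amalgamation_general
    (N : Type) [ExLang.Structure N]
    (hgen : IsGeneric ExLang (N := N) fEx) :
    ¬ ∃ b : Fin 10 → N, Function.Injective b ∧
      dM ExLang (Set.range b) = 10 ∧
      ∀ I : Finset (Fin 10), I.card = 9 →
        ∃ x ∈ {x : Fin 10 → N | ∃ e : ADom ↪[ExLang] N,
            SelfSuffM ExLang (Set.range ⇑e) ∧ ∀ i : Fin 10, e (Sum.inl i) = x i},
          ∀ i ∈ I, x i = b i := by
  rintro ⟨b, -, hd, hproj⟩
  choose x hx hxb using fun i => hproj (Finset.univ.erase i) (by simp)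
  choose e he hxe using hx
  have hagree : ∀ i k, k ≠ i → aPart (e i) k = b k :=
    fun i k hk => (hxe i k).trans (hxb i k (by simpa using hk))
  by_cases hcopy : ∃ i, aPart (e i) = b
  · obtain ⟨i, rfl⟩ := hcopy
    have := dM_range_aPart_le (he i)
    omega
  · rw [not_exists] at hcopy
    obtain ⟨D, hD, hlt⟩ := exists_delta_lt_fEx_of_copies b e hagree hcopy
    exact hlt.not_ge (hgen.le_delta hD)

/-- **Theorem 4.7**: let `M_f` be the generic structure of `(K_f, ≤)` for
`f(x) = log₈(x+1)`, and let
`E = {(α(a₁),…,α(a₁₀)) : α a ≤-embedding of A into M_f} ⊆ M_f¹⁰`.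
Then there is no `d`-independent 10-tuple of distinct elements of `M_f` all of whose
9-element projections lie in the corresponding projections of `E`.
(In particular `M_f` does not satisfy the independent amalgamation property of
Corollary 3.2, and `M_f` is not MS-measurable.) -/
theorem no_independent_amalgamation
    (N : Type) [ExLang.Structure N] [Countable N]
    (hgen : IsGeneric ExLang (N := N) fEx) :
    ¬ ∃ b : Fin 10 → N, Function.Injective b ∧
      dM ExLang (Set.range b) = 10 ∧
      ∀ I : Finset (Fin 10), I.card = 9 →
        ∃ x ∈ {x : Fin 10 → N | ∃ e : ADom ↪[ExLang] N,
            SelfSuffM ExLang (Set.range ⇑e) ∧ ∀ i : Fin 10, e (Sum.inl i) = x i},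
          ∀ i ∈ I, x i = b i :=
  no_independent_amalgamation_general N hgen

end MeasureAmalgamation
end
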